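/- arXiv:1112.1809 — 3 statements merged into one kernel-verified Lean document; each statement's English description precedes it below -/
import Mathlib

section
/- Let D be an oriented knot diagram with n ≥ 1 crossings, modeled by a Gauss code g. Then the warping polynomial and the warping crossing polynomial satisfy W_D(t) = (1 + t) · X_D(t) in ℤ[t]. -/
/-!
Moving the base point one step forward past the over-passage of a crossing raises the warping
degree by one, and moving it past an under-passage lowers it by one: only that crossing changes
status. So the over-positions contribute `X_D(t)` and the under-positions `t · ∑_c t^{d(u c + 1)}`.
Comparing `∑_e t^{d e}` with its cyclic shift `∑_e t^{d (e + 1)}` gives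
`(t - 1) (X_D(t) - ∑_c t^{d(u c + 1)}) = 0`, so the under-positions contribute `t · X_D(t)`.
-/

open Polynomial Finset

/-- An oriented knot diagram with `n` crossings, modeled by its oriented Gauss code. -/
structure GaussCode (n : ℕ) where
  g : ZMod (2 * n) → Fin n × Bool
  o : Fin n → ZMod (2 * n)
  u : Fin n → ZMod (2 * n)
  over_iff : ∀ (c : Fin n) (e : ZMod (2 * n)), g e = (c, true) ↔ e = o c
  under_iff : ∀ (c : Fin n) (e : ZMod (2 * n)), g e = (c, false) ↔ e = u c

namespace GaussCode

variable {n : ℕ}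

/-- The warping degree of the base position `e`: the number of crossings whose
under-passage occurs strictly before its over-passage when traversing the diagram
starting at `e`. -/
def d (D : GaussCode n) (e : ZMod (2 * n)) : ℕ :=
  (Finset.univ.filter fun c : Fin n => (D.u c - e).val < (D.o c - e).val).card

/-- The warping crossing polynomial. -/
noncomputable def Xpoly (D : GaussCode n) : Polynomial ℤ :=
  ∑ c : Fin n, Polynomial.X ^ D.d (D.o c)

/-- The warping polynomial. -/
noncomputable def Wpoly (D : GaussCode n) : Polynomial ℤ :=
  ∑ k ∈ Finset.range (2 * n), Polynomial.X ^ D.d (k : ZMod (2 * n))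

/-- The warping degree of the diagram: minimum over all base positions. -/
noncomputable def wdeg (D : GaussCode n) : ℕ :=
  sInf (Set.range fun e : ZMod (2 * n) => D.d e)

/-- The diagram is alternating. -/
def Alternating (D : GaussCode n) : Prop :=
  ∀ e : ZMod (2 * n), (D.g e).2 ≠ (D.g (e + 1)).2

end GaussCode

namespace ZMod

variable {N : ℕ} [NeZero N]

lemma val_sub_one_add_one {x : ZMod N} (hx : x ≠ 0) : (x - 1).val + 1 = x.val := by
  have hpos : 0 < x.val := val_pos.mpr hx
  have hcast : x - 1 = ((x.val - 1 : ℕ) : ZMod N) := by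
    rw [Nat.cast_sub hpos, natCast_zmod_val, Nat.cast_one]
  rw [hcast, val_cast_of_lt (by have := x.val_lt; omega)]
  omega

lemma val_neg_one_add_one : (-1 : ZMod N).val + 1 = N := by
  obtain ⟨M, rfl⟩ := Nat.exists_eq_succ_of_ne_zero (NeZero.ne N)
  rw [val_neg_one]

end ZMod

namespace GaussCode

variable {n : ℕ}

lemma neZero (D : GaussCode n) : NeZero n := ⟨(D.g 0).1.pos.ne'⟩

variable (D : GaussCode n)

def equiv : ZMod (2 * n) ≃ Fin n × Bool where
  toFun := D.g
  invFun p := cond p.2 (D.o p.1) (D.u p.1)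
  left_inv e := by
    rcases h : D.g e with ⟨c, _ | _⟩
    · exact ((D.under_iff c e).mp h).symm
    · exact ((D.over_iff c e).mp h).symm
  right_inv
    | (c, false) => (D.under_iff c _).mpr rfl
    | (c, true) => (D.over_iff c _).mpr rfl

lemma o_injective : Function.Injective D.o := fun c c' h => by
  simpa using D.equiv.symm.injective (a₁ := (c, true)) (a₂ := (c', true)) h

lemma u_injective : Function.Injective D.u := fun c c' h => by
  simpa using D.equiv.symm.injective (a₁ := (c, false)) (a₂ := (c', false)) h

lemma o_ne_u (c c' : Fin n) : D.o c ≠ D.u c' := fun h => by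
  simpa using D.equiv.symm.injective (a₁ := (c, true)) (a₂ := (c', false)) h

lemma sum_eq_sum_o_add_sum_u [NeZero n] {M : Type*} [AddCommMonoid M] (f : ZMod (2 * n) → M) :
    ∑ e, f e = ∑ c, f (D.o c) + ∑ c, f (D.u c) := by
  rw [← D.equiv.symm.sum_comp, Fintype.sum_prod_type, ← sum_add_distrib]
  simp [equiv]

/-- `(a - e).val` is the number of steps from `e` forward to `a`. -/
def UnderFirst (e : ZMod (2 * n)) (c : Fin n) : Prop :=
  (D.u c - e).val < (D.o c - e).val

instance (e : ZMod (2 * n)) : DecidablePred (D.UnderFirst e) :=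
  fun _ => inferInstanceAs (Decidable (_ < _))

lemma d_eq_card (e : ZMod (2 * n)) : D.d e = #(univ.filter (D.UnderFirst e)) := rfl

section

variable {D} {c : Fin n}

lemma not_underFirst_o : ¬ D.UnderFirst (D.o c) c := by
  simp [UnderFirst]

lemma underFirst_u : D.UnderFirst (D.u c) c := by
  simpa [UnderFirst, ZMod.val_pos, sub_eq_zero] using D.o_ne_u c c

variable [NeZero n] {e : ZMod (2 * n)}

lemma underFirst_add_one_iff (ho : D.o c ≠ e) (hu : D.u c ≠ e) :
    D.UnderFirst (e + 1) c ↔ D.UnderFirst e c := by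
  have ho' := ZMod.val_sub_one_add_one (sub_ne_zero.mpr ho)
  have hu' := ZMod.val_sub_one_add_one (sub_ne_zero.mpr hu)
  rw [sub_sub] at ho' hu'
  unfold UnderFirst
  omega

lemma underFirst_o_add_one : D.UnderFirst (D.o c + 1) c := by
  have hu := ZMod.val_sub_one_add_one (sub_ne_zero.mpr (D.o_ne_u c c).symm)
  have ho := ZMod.val_neg_one_add_one (N := 2 * n)
  have hlt := (D.u c - D.o c).val_lt
  rw [sub_sub] at hu
  rw [UnderFirst, show D.o c - (D.o c + 1) = -1 by ring]
  omega

lemma not_underFirst_u_add_one : ¬ D.UnderFirst (D.u c + 1) c := by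
  have hu := ZMod.val_neg_one_add_one (N := 2 * n)
  have hlt := (D.o c - (D.u c + 1)).val_lt
  rw [UnderFirst, show D.u c - (D.u c + 1) = -1 by ring]
  omega

variable (D c)

lemma d_o_add_one : D.d (D.o c + 1) = D.d (D.o c) + 1 := by
  have key : univ.filter (D.UnderFirst (D.o c + 1)) =
      insert c (univ.filter (D.UnderFirst (D.o c))) := by
    ext c'
    simp only [mem_insert, mem_filter, mem_univ, true_and]
    rcases eq_or_ne c' c with rfl | hc
    · simp [underFirst_o_add_one]
    · simp [hc, underFirst_add_one_iff (D.o_injective.ne hc) (D.o_ne_u c c').symm]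
  rw [d_eq_card, d_eq_card, key, card_insert_of_notMem (by simp [not_underFirst_o])]

lemma d_u : D.d (D.u c) = D.d (D.u c + 1) + 1 := by
  have key : univ.filter (D.UnderFirst (D.u c)) =
      insert c (univ.filter (D.UnderFirst (D.u c + 1))) := by
    ext c'
    simp only [mem_insert, mem_filter, mem_univ, true_and]
    rcases eq_or_ne c' c with rfl | hc
    · simp [underFirst_u]
    · simp [hc, underFirst_add_one_iff (D.o_ne_u c' c) (D.u_injective.ne hc)]
  rw [d_eq_card, d_eq_card, key, card_insert_of_notMem (by simp [not_underFirst_u_add_one])]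

lemma Wpoly_eq_sum : D.Wpoly = ∑ e, X ^ D.d e :=
  sum_nbij' (↑) ZMod.val (by simp) (by simp [ZMod.val_lt])
    (fun k hk => ZMod.val_cast_of_lt (mem_range.mp hk)) (by simp) (by simp)

lemma sum_X_pow_d_eq : ∑ e, (X : ℤ[X]) ^ D.d e = D.Xpoly + X * ∑ c, X ^ D.d (D.u c + 1) := by
  rw [D.sum_eq_sum_o_add_sum_u, Xpoly, mul_sum]
  simp only [D.d_u, pow_succ']

lemma sum_X_pow_d_add_one_eq :
    ∑ e, (X : ℤ[X]) ^ D.d (e + 1) = X * D.Xpoly + ∑ c, X ^ D.d (D.u c + 1) := by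
  rw [D.sum_eq_sum_o_add_sum_u fun e => (X : ℤ[X]) ^ D.d (e + 1), Xpoly, mul_sum]
  simp only [D.d_o_add_one, pow_succ']

lemma Xpoly_eq_sum_X_pow_d_u_add_one : D.Xpoly = ∑ c, X ^ D.d (D.u c + 1) := by
  have hshift := Equiv.sum_comp (Equiv.addRight (1 : ZMod (2 * n))) fun e => (X : ℤ[X]) ^ D.d e
  simp only [Equiv.coe_addRight, sum_X_pow_d_add_one_eq, sum_X_pow_d_eq] at hshift
  have hfactor : (X - C 1) * (D.Xpoly - ∑ c, X ^ D.d (D.u c + 1)) = 0 := by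
    rw [C_1]
    linear_combination hshift
  exact sub_eq_zero.mp ((mul_eq_zero.mp hfactor).resolve_left (X_sub_C_ne_zero 1))

end

end GaussCode

theorem warping_poly_eq_one_add_X_mul_warping_crossing_poly_general
    (n : ℕ) (D : GaussCode n) :
    D.Wpoly = (1 + Polynomial.X) * D.Xpoly := by
  have := D.neZero
  rw [D.Wpoly_eq_sum, D.sum_X_pow_d_eq, ← D.Xpoly_eq_sum_X_pow_d_u_add_one]
  ring

/-- **Theorem (Shimizu).** For a knot diagram with `n ≥ 1` crossings,
`W_D(t) = (1 + t) ⬝ X_D(t)`. -/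
theorem warping_poly_eq_one_add_X_mul_warping_crossing_poly
    (n : ℕ) (hn : 1 ≤ n) (D : GaussCode n) :
    D.Wpoly = (1 + Polynomial.X) * D.Xpoly :=
  warping_poly_eq_one_add_X_mul_warping_crossing_poly_general n D
end

section
/- Let P be a knot projection with n ≥ 1 crossings. Then the state sum of the warping crossing polynomials over all 2^n states of P satisfies Z_P(t) = 2n(1 + t)^(n−1) in ℤ[t]. -/
open Polynomial Finset
open scoped Classical

/-- `g` is an oriented Gauss code with `n` crossings: each crossing has exactly one
over-passage and exactly one under-passage. -/
def IsGaussCode (n : ℕ) (g : ZMod (2 * n) → Fin n × Bool) : Prop :=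
  ∀ c : Fin n, (∃! e, g e = (c, true)) ∧ (∃! e, g e = (c, false))

/-- The warping degree of the base position `e` of the code `g`: the number of crossings
whose under-passage occurs strictly before its over-passage in the list
`e, e+1, …, e+2n−1`. -/

noncomputable def dRaw (n : ℕ) (g : ZMod (2 * n) → Fin n × Bool) (e : ZMod (2 * n)) : ℕ :=
  (Finset.univ.filter fun c : Fin n =>
    ∃ j ∈ Finset.range (2 * n), ∃ k ∈ Finset.range (2 * n),
      j < k ∧ g (e + (j : ZMod (2 * n))) = (c, false)
            ∧ g (e + (k : ZMod (2 * n))) = (c, true)).card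

/-- The warping crossing polynomial of the code `g`: the sum of the crossing weights
`t^(d (o c))` over all crossings `c`, i.e. the sum of `t^(d e)` over all over-passage
positions `e`. -/
noncomputable def XRaw (n : ℕ) (g : ZMod (2 * n) → Fin n × Bool) : Polynomial ℤ :=
  ∑ k ∈ Finset.range (2 * n),
    if (g (k : ZMod (2 * n))).2 = true
    then (Polynomial.X : Polynomial ℤ) ^ dRaw n g (k : ZMod (2 * n)) else 0

/-- The warping polynomial of the code `g`: the sum of `t^(d e)` over all positions. -/
noncomputable def WRaw (n : ℕ) (g : ZMod (2 * n) → Fin n × Bool) : Polynomial ℤ :=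
  ∑ k ∈ Finset.range (2 * n), (Polynomial.X : Polynomial ℤ) ^ dRaw n g (k : ZMod (2 * n))

/-- `p` is a knot projection with `n` crossings: every crossing has exactly two
preimage positions. -/
def IsProjection (n : ℕ) (p : ZMod (2 * n) → Fin n) : Prop :=
  ∀ c : Fin n, ∃ e₁ e₂ : ZMod (2 * n), e₁ ≠ e₂ ∧ ∀ e, p e = c ↔ e = e₁ ∨ e = e₂

/-- The finset of all states of the projection `p`: Gauss codes obtained from `p` by
giving each crossing over/under information. -/

noncomputable def statesFinset (n : ℕ) (hn : 1 ≤ n) (p : ZMod (2 * n) → Fin n) :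
    Finset (ZMod (2 * n) → Fin n × Bool) :=
  haveI : NeZero (2 * n) := ⟨by omega⟩
  Finset.univ.filter fun g => IsGaussCode n g ∧ ∀ e, (g e).1 = p e

/-!
Choose for each crossing `c` its two positions `E₁ c ≠ E₂ c`; the states of the projection are
then exactly the codes `stateOf p E₁ b`, where `b c` says whether `E₁ c` is the over-passage.
Exchanging the two sums, fix a base position `e` and sum over the states in which `e` is an
over-passage, of crossing `c₀` say. Then `c₀` never counts in the warping degree at `e`, while
each other crossing counts for exactly one of its two orientations, independently of the rest;
so every one of the `2n` positions contributes `(1 + t)^(n-1)`.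
-/

lemma sum_pow_card_agree {ι R : Type*} [Fintype ι] [DecidableEq ι] [CommSemiring R] (x : R)
    (w : ι → Bool) (i : ι) :
    ∑ b ∈ univ.filter (fun b : ι → Bool => b i ≠ w i), x ^ #{c | b c = w c}
      = (1 + x) ^ (Fintype.card ι - 1) := by
  calc ∑ b ∈ univ.filter (fun b : ι → Bool => b i ≠ w i), x ^ #{c | b c = w c}
      = ∑ s ∈ (univ.erase i).powerset, x ^ #s := by
        refine Finset.sum_nbij' (fun b => ({c | b c = w c} : Finset ι))
          (fun s c => if c ∈ s then w c else !w c) ?_ ?_ ?_ ?_ (fun _ _ => rfl)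
        · intro b hb
          replace hb : b i ≠ w i := by simpa using hb
          refine mem_powerset.2 fun c hc => ?_
          simp only [mem_filter, mem_univ, true_and] at hc
          exact mem_erase.2 ⟨by rintro rfl; exact hb hc, mem_univ c⟩
        · intro s hs
          have : i ∉ s := fun h => (mem_erase.1 (mem_powerset.1 hs h)).1 rfl
          simp [this]
        · intro b _
          funext c
          by_cases h : b c = w c
          · simp [h]
          · simp [Bool.eq_not.2 h]
        · intro s _
          ext c
          by_cases h : c ∈ s <;> simp [h]
    _ = (1 + x) ^ (Fintype.card ι - 1) := by
        simpa [card_erase_of_mem, add_comm] using sum_pow_mul_eq_add_pow x 1 (univ.erase i)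

lemma dRaw_eq_card {n : ℕ} [NeZero (2 * n)] (g : ZMod (2 * n) → Fin n × Bool)
    (e : ZMod (2 * n)) :
    dRaw n g e = #{c | ∃ x y, g x = (c, false) ∧ g y = (c, true) ∧ (x - e).val < (y - e).val} := by
  unfold dRaw
  congr 1
  ext c
  simp only [mem_filter, mem_univ, true_and, mem_range]
  constructor
  · rintro ⟨j, hj, k, hk, hjk, hu, ho⟩
    refine ⟨_, _, hu, ho, ?_⟩
    simpa [ZMod.val_cast_of_lt hj, ZMod.val_cast_of_lt hk] using hjk
  · rintro ⟨x, y, hu, ho, hxy⟩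
    exact ⟨(x - e).val, ZMod.val_lt _, (y - e).val, ZMod.val_lt _, hxy,
      by simpa using hu, by simpa using ho⟩

lemma IsGaussCode.injective {n : ℕ} {g : ZMod (2 * n) → Fin n × Bool} (hg : IsGaussCode n g) :
    Function.Injective g := by
  intro x y hxy
  rcases hx : g x with ⟨c, _ | _⟩
  · exact (hg c).2.unique hx (hxy ▸ hx)
  · exact (hg c).1.unique hx (hxy ▸ hx)

section States

variable {n : ℕ} {p : ZMod (2 * n) → Fin n} {E₁ E₂ : Fin n → ZMod (2 * n)}

def stateOf (p : ZMod (2 * n) → Fin n) (E₁ : Fin n → ZMod (2 * n)) (b : Fin n → Bool)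
    (e : ZMod (2 * n)) : Fin n × Bool :=
  (p e, if e = E₁ (p e) then b (p e) else !b (p e))

lemma stateOf_apply_left (hfib : ∀ c e, p e = c ↔ e = E₁ c ∨ e = E₂ c) (b : Fin n → Bool)
    (c : Fin n) : stateOf p E₁ b (E₁ c) = (c, b c) := by
  simp [stateOf, (hfib c _).2 (Or.inl rfl)]

lemma stateOf_apply_right (hne : ∀ c, E₁ c ≠ E₂ c) (hfib : ∀ c e, p e = c ↔ e = E₁ c ∨ e = E₂ c)
    (b : Fin n → Bool) (c : Fin n) : stateOf p E₁ b (E₂ c) = (c, !b c) := by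
  simp [stateOf, (hfib c _).2 (Or.inr rfl), (hne c).symm]

lemma stateOf_eq_iff (hne : ∀ c, E₁ c ≠ E₂ c) (hfib : ∀ c e, p e = c ↔ e = E₁ c ∨ e = E₂ c)
    {b : Fin n → Bool} {x : ZMod (2 * n)} {c : Fin n} {v : Bool} :
    stateOf p E₁ b x = (c, v) ↔ x = E₁ c ∧ b c = v ∨ x = E₂ c ∧ b c = !v := by
  constructor
  · intro h
    have hx : p x = c := congrArg Prod.fst h
    rcases (hfib c x).1 hx with rfl | rfl
    · rw [stateOf_apply_left hfib, Prod.mk.injEq] at h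
      exact Or.inl ⟨rfl, h.2⟩
    · rw [stateOf_apply_right hne hfib, Prod.mk.injEq, Bool.not_eq_eq_eq_not] at h
      exact Or.inr ⟨rfl, h.2⟩
  · rintro (⟨rfl, rfl⟩ | ⟨rfl, hb⟩)
    · exact stateOf_apply_left hfib b c
    · rw [stateOf_apply_right hne hfib, hb, Bool.not_not]

lemma isGaussCode_stateOf (hne : ∀ c, E₁ c ≠ E₂ c)
    (hfib : ∀ c e, p e = c ↔ e = E₁ c ∨ e = E₂ c) (b : Fin n → Bool) :
    IsGaussCode n (stateOf p E₁ b) := by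
  intro c
  simp only [stateOf_eq_iff hne hfib]
  constructor <;> cases b c <;> simp

lemma stateOf_injective (hfib : ∀ c e, p e = c ↔ e = E₁ c ∨ e = E₂ c) :
    Function.Injective (stateOf p E₁) := by
  intro b b' h
  funext c
  simpa [stateOf_apply_left hfib] using congrArg (fun g => (g (E₁ c)).2) h

lemma eq_stateOf (hne : ∀ c, E₁ c ≠ E₂ c) (hfib : ∀ c e, p e = c ↔ e = E₁ c ∨ e = E₂ c)
    {g : ZMod (2 * n) → Fin n × Bool} (hg : IsGaussCode n g) (hgp : ∀ e, (g e).1 = p e) :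
    g = stateOf p E₁ fun c => (g (E₁ c)).2 := by
  have hfst : ∀ x c, x = E₁ c ∨ x = E₂ c → (g x).1 = c := fun x c hx =>
    (hgp x).trans ((hfib c x).2 hx)
  funext x
  rcases (hfib (p x) x).1 rfl with h | h <;> rw [h]
  · rw [stateOf_apply_left hfib]
    exact Prod.ext (hfst _ _ (Or.inl rfl)) rfl
  · rw [stateOf_apply_right hne hfib]
    refine Prod.ext (hfst _ _ (Or.inr rfl)) (Bool.eq_not.2 fun hsnd => hne (p x) ?_)
    exact hg.injective (Prod.ext ((hfst _ _ (Or.inl rfl)).trans (hfst _ _ (Or.inr rfl)).symm)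
      hsnd.symm)

lemma statesFinset_eq_image (hn : 1 ≤ n) (hne : ∀ c, E₁ c ≠ E₂ c)
    (hfib : ∀ c e, p e = c ↔ e = E₁ c ∨ e = E₂ c) :
    statesFinset n hn p = univ.image (stateOf p E₁) := by
  ext g
  simp only [statesFinset, mem_filter, mem_univ, true_and, mem_image]
  constructor
  · rintro ⟨hg, hgp⟩
    exact ⟨_, (eq_stateOf hne hfib hg hgp).symm⟩
  · rintro ⟨b, rfl⟩
    exact ⟨isGaussCode_stateOf hne hfib b, fun _ => rfl⟩

lemma dRaw_stateOf [NeZero (2 * n)] (hne : ∀ c, E₁ c ≠ E₂ c)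
    (hfib : ∀ c e, p e = c ↔ e = E₁ c ∨ e = E₂ c) (b : Fin n → Bool) (e : ZMod (2 * n)) :
    dRaw n (stateOf p E₁ b) e = #{c | b c = decide ((E₂ c - e).val < (E₁ c - e).val)} := by
  rw [dRaw_eq_card]
  congr 1
  ext c
  have hval : (E₁ c - e).val ≠ (E₂ c - e).val := fun h =>
    hne c (sub_left_inj.1 (ZMod.val_injective _ h))
  simp only [mem_filter, mem_univ, true_and, stateOf_eq_iff hne hfib]
  cases b c <;> simp; omega

lemma stateOf_snd_eq_true_iff (hne : ∀ c, E₁ c ≠ E₂ c)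
    (hfib : ∀ c e, p e = c ↔ e = E₁ c ∨ e = E₂ c) (b : Fin n → Bool) (e : ZMod (2 * n)) :
    (stateOf p E₁ b e).2 = true ↔
      b (p e) ≠ decide ((E₂ (p e) - e).val < (E₁ (p e) - e).val) := by
  generalize hc : p e = c
  rcases (hfib c e).1 hc with rfl | rfl
  · simp [stateOf_apply_left hfib]
  · have : 0 < (E₁ c - E₂ c).val := ZMod.val_pos.2 (sub_ne_zero.2 (hne c))
    simp [stateOf_apply_right hne hfib, this]

lemma sum_over_stateOf_at [NeZero (2 * n)] (hne : ∀ c, E₁ c ≠ E₂ c)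
    (hfib : ∀ c e, p e = c ↔ e = E₁ c ∨ e = E₂ c) (e : ZMod (2 * n)) :
    ∑ b, (if (stateOf p E₁ b e).2 = true then (X : ℤ[X]) ^ dRaw n (stateOf p E₁ b) e else 0)
      = (1 + X) ^ (n - 1) := by
  rw [← sum_filter]
  set w : Fin n → Bool := fun c => decide ((E₂ c - e).val < (E₁ c - e).val)
  calc _ = ∑ b ∈ univ.filter (fun b : Fin n → Bool => b (p e) ≠ w (p e)),
        X ^ #{c | b c = w c} :=
        sum_congr (filter_congr fun b _ => stateOf_snd_eq_true_iff hne hfib b e) fun b _ => by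
          rw [dRaw_stateOf hne hfib]
    _ = (1 + X) ^ (n - 1) := by rw [sum_pow_card_agree, Fintype.card_fin]

end States

/-- **Theorem (Shimizu–Kawauchi).** For a knot projection `P` with `n ≥ 1` crossings, the
state sum of the warping crossing polynomials over all states is
`Z_P(t) = 2n(1 + t)^(n−1)`. -/
theorem state_sum_Xpoly (n : ℕ) (hn : 1 ≤ n) (p : ZMod (2 * n) → Fin n)
    (hp : IsProjection n p) :
    ∑ g ∈ statesFinset n hn p, XRaw n g
      = 2 * (n : Polynomial ℤ) * (1 + Polynomial.X) ^ (n - 1) := by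
  choose E₁ E₂ hne hfib using hp
  rw [statesFinset_eq_image hn hne hfib, sum_image fun b _ b' _ h => stateOf_injective hfib h]
  -- only now, so that the `DecidableEq` instance of the image above stays the classical one
  have : NeZero (2 * n) := ⟨by omega⟩
  simp only [XRaw]
  rw [sum_comm, sum_congr rfl fun (k : ℕ) _ => sum_over_stateOf_at hne hfib (k : ZMod (2 * n)),
    sum_const, card_range, nsmul_eq_mul]
  push_cast
  ring
end

section
/- Let P be a knot projection with n ≥ 1 crossings, let e : ZMod (2*n) be a fixed position (edge), and let m be a natural number with 0 ≤ m ≤ n. Then the number of states D of P whose warping degree at e satisfies d e = m is exactly the binomial coefficient C(n, m). -/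
open Polynomial Finset
open scoped Classical

/-!
Order the two passages of each crossing `c` by their distance from the base point `e`,
calling them `fst c` and `snd c`. A state is determined by the set `S` of crossings whose
first passage is the under-passage, every subset `S` arises, and the warping degree at `e`
is exactly `#S`. So the states of warping degree `m` correspond to the `m`-subsets of the
`n` crossings.
-/

def relPos {N : ℕ} (e x : ZMod N) : ℕ := (x - e).val

theorem relPos_add_natCast {N : ℕ} (e : ZMod N) {j : ℕ} (hj : j < N) : relPos e (e + j) = j := by
  simp [relPos, ZMod.val_cast_of_lt hj]

section RelPos

variable {N : ℕ} [NeZero N]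

theorem relPos_lt (e x : ZMod N) : relPos e x < N := ZMod.val_lt _

theorem add_relPos (e x : ZMod N) : e + (relPos e x : ZMod N) = x := by
  simp [relPos]

theorem relPos_injective (e : ZMod N) : Function.Injective (relPos e) := fun x y h => by
  rw [← add_relPos e x, h, add_relPos]

end RelPos

theorem dRaw_eq_card_filter {n : ℕ} [NeZero n] (g : ZMod (2 * n) → Fin n × Bool)
    (e : ZMod (2 * n)) :
    dRaw n g e = #{c | ∃ x y, g x = (c, false) ∧ g y = (c, true) ∧ relPos e x < relPos e y} := by
  unfold dRaw
  congr 1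
  ext c
  simp only [mem_filter, mem_univ, true_and, mem_range]
  constructor
  · rintro ⟨j, hj, k, hk, hjk, hu, ho⟩
    exact ⟨_, _, hu, ho, by rwa [relPos_add_natCast e hj, relPos_add_natCast e hk]⟩
  · rintro ⟨x, y, hu, ho, hxy⟩
    exact ⟨_, relPos_lt e x, _, relPos_lt e y, hxy, by rwa [add_relPos], by rwa [add_relPos]⟩

theorem mem_statesFinset {n : ℕ} {hn : 1 ≤ n} {p : ZMod (2 * n) → Fin n}
    {g : ZMod (2 * n) → Fin n × Bool} :
    g ∈ statesFinset n hn p ↔ IsGaussCode n g ∧ ∀ x, (g x).1 = p x := by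
  simp [statesFinset]

theorem IsGaussCode.existsUnique {n : ℕ} {g : ZMod (2 * n) → Fin n × Bool}
    (hg : IsGaussCode n g) (c : Fin n) (b : Bool) : ∃! x, g x = (c, b) := by
  cases b
  exacts [(hg c).2, (hg c).1]

theorem IsProjection.exists_sorted_fibre {n : ℕ} [NeZero n] {p : ZMod (2 * n) → Fin n}
    (hp : IsProjection n p) (e : ZMod (2 * n)) (c : Fin n) :
    ∃ x₁ x₂, (∀ x, p x = c ↔ x = x₁ ∨ x = x₂) ∧ relPos e x₁ < relPos e x₂ := by
  obtain ⟨a, b, hab, hfib⟩ := hp c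
  rcases lt_or_gt_of_ne ((relPos_injective e).ne hab) with hlt | hlt
  · exact ⟨a, b, hfib, hlt⟩
  · exact ⟨b, a, fun x => (hfib x).trans or_comm, hlt⟩

section States

variable {n : ℕ}

def underFirst (fst : Fin n → ZMod (2 * n)) (g : ZMod (2 * n) → Fin n × Bool) :
    Finset (Fin n) :=
  {c | (g (fst c)).2 = false}

def stateOfUnder (p : ZMod (2 * n) → Fin n) (fst : Fin n → ZMod (2 * n)) (S : Finset (Fin n)) :
    ZMod (2 * n) → Fin n × Bool :=
  fun x => (p x, if x = fst (p x) then decide (p x ∉ S) else decide (p x ∈ S))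

variable {p : ZMod (2 * n) → Fin n} {fst snd : Fin n → ZMod (2 * n)}

theorem p_fst (hfib : ∀ c x, p x = c ↔ x = fst c ∨ x = snd c) (c : Fin n) : p (fst c) = c :=
  (hfib c _).2 (Or.inl rfl)

theorem p_snd (hfib : ∀ c x, p x = c ↔ x = fst c ∨ x = snd c) (c : Fin n) : p (snd c) = c :=
  (hfib c _).2 (Or.inr rfl)

theorem apply_eq_mk_iff (hfib : ∀ c x, p x = c ↔ x = fst c ∨ x = snd c)
    {g : ZMod (2 * n) → Fin n × Bool} (hg : ∀ x, (g x).1 = p x) (c : Fin n) (b : Bool)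
    (x : ZMod (2 * n)) : g x = (c, b) ↔ (x = fst c ∨ x = snd c) ∧ (g x).2 = b := by
  rw [← hfib, ← hg, Prod.ext_iff]

theorem isGaussCode_iff (hfib : ∀ c x, p x = c ↔ x = fst c ∨ x = snd c)
    (hne : ∀ c, fst c ≠ snd c) {g : ZMod (2 * n) → Fin n × Bool} (hg : ∀ x, (g x).1 = p x) :
    IsGaussCode n g ↔ ∀ c, (g (snd c)).2 = !(g (fst c)).2 := by
  have hfibre := apply_eq_mk_iff hfib hg
  constructor
  · intro hgc c
    by_contra hflip
    exact hne c <| (hgc.existsUnique c (g (fst c)).2).unique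
      ((hfibre ..).2 ⟨Or.inl rfl, rfl⟩) ((hfibre ..).2 ⟨Or.inr rfl, by simpa using hflip⟩)
  · intro hflip c
    suffices ∀ b, ∃! x, g x = (c, b) from ⟨this true, this false⟩
    intro b
    simp_rw [hfibre]
    by_cases hb : (g (fst c)).2 = b
    · refine ⟨fst c, ⟨Or.inl rfl, hb⟩, ?_⟩
      rintro y ⟨rfl | rfl, hy⟩
      · rfl
      · simp [hflip, ← hb] at hy
    · refine ⟨snd c, ⟨Or.inr rfl, by rw [hflip]; exact (Bool.eq_not.mpr (Ne.symm hb)).symm⟩, ?_⟩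
      rintro y ⟨rfl | rfl, hy⟩
      · exact absurd hy hb
      · rfl

theorem underFirst_stateOfUnder (hfib : ∀ c x, p x = c ↔ x = fst c ∨ x = snd c)
    (S : Finset (Fin n)) : underFirst fst (stateOfUnder p fst S) = S := by
  ext c
  simp [underFirst, stateOfUnder, p_fst hfib]

theorem isGaussCode_stateOfUnder (hfib : ∀ c x, p x = c ↔ x = fst c ∨ x = snd c)
    (hne : ∀ c, fst c ≠ snd c) (S : Finset (Fin n)) : IsGaussCode n (stateOfUnder p fst S) := by
  rw [isGaussCode_iff hfib hne fun _ => rfl]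
  intro c
  simp [stateOfUnder, p_fst hfib, p_snd hfib, (hne c).symm]

theorem stateOfUnder_underFirst (hfib : ∀ c x, p x = c ↔ x = fst c ∨ x = snd c)
    (hne : ∀ c, fst c ≠ snd c) {g : ZMod (2 * n) → Fin n × Bool} (hg : ∀ x, (g x).1 = p x)
    (hgc : IsGaussCode n g) : stateOfUnder p fst (underFirst fst g) = g := by
  have hflip := (isGaussCode_iff hfib hne hg).1 hgc
  funext x
  refine Prod.ext (hg x).symm ?_
  obtain ⟨c, hc⟩ : ∃ c, p x = c := ⟨_, rfl⟩
  rcases (hfib c x).1 hc with rfl | rfl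
  · simp [stateOfUnder, underFirst, hc]
  · simp [stateOfUnder, underFirst, hc, (hne c).symm, hflip c]

theorem dRaw_eq_card_underFirst [NeZero n] {e : ZMod (2 * n)}
    (hfib : ∀ c x, p x = c ↔ x = fst c ∨ x = snd c)
    (hlt : ∀ c, relPos e (fst c) < relPos e (snd c)) {g : ZMod (2 * n) → Fin n × Bool}
    (hg : ∀ x, (g x).1 = p x) (hgc : IsGaussCode n g) : dRaw n g e = #(underFirst fst g) := by
  have hflip := (isGaussCode_iff hfib (fun c h => (hlt c).ne (congrArg _ h)) hg).1 hgc
  rw [dRaw_eq_card_filter, underFirst]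
  congr 1
  ext c
  simp only [mem_filter, mem_univ, true_and]
  constructor
  · rintro ⟨x, y, hu, ho, hxy⟩
    obtain ⟨rfl | rfl, hx⟩ := (apply_eq_mk_iff hfib hg c _ x).1 hu
    · exact hx
    obtain ⟨rfl | rfl, hy⟩ := (apply_eq_mk_iff hfib hg c _ y).1 ho
    · exact absurd hxy (hlt c).asymm
    · simp [hx] at hy
  · intro hu
    refine ⟨fst c, snd c, (apply_eq_mk_iff hfib hg ..).2 ⟨Or.inl rfl, hu⟩,
      (apply_eq_mk_iff hfib hg ..).2 ⟨Or.inr rfl, by rw [hflip, hu]; rfl⟩, hlt c⟩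

theorem card_filter_dRaw_statesFinset [NeZero n] (hn : 1 ≤ n) {e : ZMod (2 * n)}
    (hfib : ∀ c x, p x = c ↔ x = fst c ∨ x = snd c)
    (hlt : ∀ c, relPos e (fst c) < relPos e (snd c)) (m : ℕ) :
    #{g ∈ statesFinset n hn p | dRaw n g e = m} = #(powersetCard m (univ : Finset (Fin n))) := by
  have hne : ∀ c, fst c ≠ snd c := fun c h => (hlt c).ne (congrArg _ h)
  refine card_bij' (fun g _ => underFirst fst g) (fun S _ => stateOfUnder p fst S)
    ?_ ?_ ?_ fun S _ => underFirst_stateOfUnder hfib S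
  · intro g hg
    obtain ⟨⟨hgc, hgp⟩, hd⟩ := (mem_filter.trans (and_congr_left' mem_statesFinset)).1 hg
    simp [← dRaw_eq_card_underFirst hfib hlt hgp hgc, hd]
  · intro S hS
    have hS_code := isGaussCode_stateOfUnder hfib hne S
    refine mem_filter.2 ⟨mem_statesFinset.2 ⟨hS_code, fun _ => rfl⟩, ?_⟩
    rw [dRaw_eq_card_underFirst hfib hlt (fun _ => rfl) hS_code, underFirst_stateOfUnder hfib,
      (mem_powersetCard.1 hS).2]
  · intro g hg
    obtain ⟨hgc, hgp⟩ := mem_statesFinset.1 (mem_filter.1 hg).1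
    exact stateOfUnder_underFirst hfib hne hgp hgc

end States

theorem card_states_with_warping_degree_general (n : ℕ) (hn : 1 ≤ n) (p : ZMod (2 * n) → Fin n)
    (hp : IsProjection n p) (e : ZMod (2 * n)) (m : ℕ) :
    ((statesFinset n hn p).filter fun g => dRaw n g e = m).card = n.choose m := by
  have : NeZero n := ⟨by omega⟩
  choose fst snd hfib hlt using hp.exists_sorted_fibre e
  rw [card_filter_dRaw_statesFinset hn hfib hlt, card_powersetCard, card_univ, Fintype.card_fin]

/-- For a knot projection `P` with `n ≥ 1` crossings, a fixed edge `e` and `m ≤ n`,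
exactly `C(n, m)` of the states have warping degree `m` at `e`. -/
theorem card_states_with_warping_degree (n : ℕ) (hn : 1 ≤ n) (p : ZMod (2 * n) → Fin n)
    (hp : IsProjection n p) (e : ZMod (2 * n)) (m : ℕ) (hm : m ≤ n) :
    ((statesFinset n hn p).filter fun g => dRaw n g e = m).card = n.choose m :=
  card_states_with_warping_degree_general n hn p hp e m
end
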